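/- arXiv:0809.2380 — 4 statements merged into one kernel-verified Lean document; each statement's English description precedes it below -/
import Mathlib

section
/- Let O be a cyclic operad. For α ∈ O(m) (regarded as an operation with m+1 inputs), β ∈ O(n), define the last-slot composition α • β := τ_{n+1}(β) ∘_1 α ∈ O(m+n-1) (regarded as an operation with m+n inputs). Then for every γ ∈ O(p) and every j with 1 ≤ j ≤ m, one has (α • β) ∘_j γ = (α ∘_j γ) • β in O(m+n+p-2). (First case of associativity of the composition in the colored operad Ô.) -/
/-- A cyclic operad, encoded in bundled form: `A` is the disjoint union of the
spaces `O(n)` (`n ≥ 1`), `ar α = n` means `α ∈ O(n)`, `comp α i β` is the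
partial composition `α ∘ᵢ β ∈ O(ar α + ar β - 1)` (meaningful for
`1 ≤ i ≤ ar α`), and `rot α` is the cyclic rotation `τ_{n+1}(α)` for
`α ∈ O(n)` (the generator of the cyclic group `ℤ_{n+1} ⊆ S_{n+1}` acting on
`O(n)`, extending the `S_n`-action).  The axioms are: sequential and parallel
associativity of the partial compositions, the rotation has order dividing
`n + 1` on `O(n)`, and the cyclicity axioms
(C1) `τ_{m+n}(α ∘_k β) = τ_{m+1}(α) ∘_{k+1} β` for `k < m`, and
(C2) `τ_{m+n}(α ∘_m β) = τ_{n+1}(β) ∘_1 τ_{m+1}(α)`. -/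
structure CyclicOperad (A : Type*) where
  /-- the arity: `ar α = n` means `α ∈ O(n)` -/
  ar : A → ℕ
  ar_pos : ∀ α, 1 ≤ ar α
  /-- partial composition `α ∘ᵢ β`, meaningful for `1 ≤ i ≤ ar α` -/
  comp : A → ℕ → A → A
  ar_comp : ∀ α i β, ar (comp α i β) = ar α + ar β - 1
  /-- the cyclic rotation `τ_{n+1}` on `O(n)` -/
  rot : A → A
  ar_rot : ∀ α, ar (rot α) = ar α
  /-- `τ_{n+1}` has order (dividing) `n+1` on `O(n)`, as it generates
  `ℤ_{n+1} ⊆ S_{n+1}` -/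
  rot_order : ∀ α, rot^[ar α + 1] α = α
  /-- sequential associativity:
  `(α ∘ᵢ β) ∘_{i+j-1} γ = α ∘ᵢ (β ∘ⱼ γ)` for `1 ≤ i ≤ ar α`, `1 ≤ j ≤ ar β` -/
  assoc_seq : ∀ α β γ (i j : ℕ), 1 ≤ i → i ≤ ar α → 1 ≤ j → j ≤ ar β →
    comp (comp α i β) (i + j - 1) γ = comp α i (comp β j γ)
  /-- parallel associativity:
  `(α ∘ⱼ γ) ∘ᵢ β = (α ∘ᵢ β) ∘_{j + ar β - 1} γ` for `1 ≤ i < j ≤ ar α` -/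
  assoc_par : ∀ α β γ (i j : ℕ), 1 ≤ i → i < j → j ≤ ar α →
    comp (comp α j γ) i β = comp (comp α i β) (j + ar β - 1) γ
  /-- cyclicity (C1): `τ_{m+n}(α ∘_k β) = τ_{m+1}(α) ∘_{k+1} β` for `k < m` -/
  cyc1 : ∀ α β (k : ℕ), 1 ≤ k → k < ar α →
    rot (comp α k β) = comp (rot α) (k + 1) β
  /-- cyclicity (C2): `τ_{m+n}(α ∘_m β) = τ_{n+1}(β) ∘_1 τ_{m+1}(α)` -/
  cyc2 : ∀ α β, rot (comp α (ar α) β) = comp (rot β) 1 (rot α)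

/-- The last-slot composition `α • β := τ_{n+1}(β) ∘_1 α`, for
`α ∈ O(m)` regarded as an operation with `m+1` inputs. -/
def CyclicOperad.lastComp {A : Type*} (Op : CyclicOperad A) (α β : A) : A :=
  Op.comp (Op.rot β) 1 α

/-- First case of associativity in `Ô`: for `α ∈ O(m)`, `β ∈ O(n)`, `γ ∈ O(p)`
and `1 ≤ j ≤ m`, one has `(α • β) ∘_j γ = (α ∘_j γ) • β` in `O(m+n+p-2)`,
where `α • β = τ_{n+1}(β) ∘_1 α` is the last-slot composition. -/
theorem stmt1 {A : Type*} (Op : CyclicOperad A) (m n p : ℕ) (α β γ : A)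
    (hα : Op.ar α = m) (hβ : Op.ar β = n) (hγ : Op.ar γ = p)
    (j : ℕ) (hj1 : 1 ≤ j) (hj2 : j ≤ m) :
    Op.comp (Op.lastComp α β) j γ = Op.lastComp (Op.comp α j γ) β := by
  have h := Op.assoc_seq (Op.rot β) α γ 1 j le_rfl (Op.ar_rot β ▸ Op.ar_pos β) hj1 (hα ▸ hj2)
  simpa [CyclicOperad.lastComp, Nat.add_sub_cancel_left] using h
end

section
/- Let O be a cyclic operad. For α ∈ O(m) (regarded as an operation with m+1 inputs), β ∈ O(n), define the last-slot composition α • β := τ_{n+1}(β) ∘_1 α ∈ O(m+n-1) (regarded as an operation with m+n inputs). Then for every γ ∈ O(p) and every j with m < j < m+n, one has (α • β) ∘_j γ = α • (β ∘_{j-m} γ) in O(m+n+p-2). (Second case of associativity of the composition in the colored operad Ô; its proof uses the cyclicity axiom (C1).) -/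
/-- Second case of associativity in `Ô`: for `α ∈ O(m)`, `β ∈ O(n)`,
`γ ∈ O(p)` and `m < j < m+n`, one has
`(α • β) ∘_j γ = α • (β ∘_{j-m} γ)` in `O(m+n+p-2)`,
where `α • β = τ_{n+1}(β) ∘_1 α` is the last-slot composition. -/
theorem stmt2 {A : Type*} (Op : CyclicOperad A) (m n p : ℕ) (α β γ : A)
    (hα : Op.ar α = m) (hβ : Op.ar β = n) (hγ : Op.ar γ = p)
    (j : ℕ) (hj1 : m < j) (hj2 : j < m + n) :
    Op.comp (Op.lastComp α β) j γ = Op.lastComp α (Op.comp β (j - m) γ) := by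
  set k := j - m with hk
  have hk1 : 1 ≤ k := by omega
  have hkn : k < n := by omega
  unfold CyclicOperad.lastComp
  rw [Op.cyc1 β γ k hk1 (by omega : k < Op.ar β)]
  rw [Op.assoc_par (Op.rot β) α γ 1 (k+1) le_rfl (by omega)
    (by rw [Op.ar_rot, hβ]; omega)]
  congr 1
  rw [hα]; omega
end

section
/- Let O be a cyclic operad. For α ∈ O(m) (regarded as an operation with m+1 inputs), β ∈ O(n), define the last-slot composition α • β := τ_{n+1}(β) ∘_1 α ∈ O(m+n-1) (regarded as an operation with m+n inputs). Then for every γ ∈ O(p), one has (α • β) • γ = α • (β ∘_n γ) in O(m+n+p-2); equivalently, τ_{p+1}(γ) ∘_1 (τ_{n+1}(β) ∘_1 α) = τ_{n+p}(β ∘_n γ) ∘_1 α. (Third case of associativity of the composition in the colored operad Ô; its proof uses the cyclicity axiom (C2).) -/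
/-- Third case of associativity in `Ô`: for `α ∈ O(m)`, `β ∈ O(n)`,
`γ ∈ O(p)`, one has `(α • β) • γ = α • (β ∘_n γ)` in `O(m+n+p-2)`;
equivalently `τ_{p+1}(γ) ∘_1 (τ_{n+1}(β) ∘_1 α) = τ_{n+p}(β ∘_n γ) ∘_1 α`,
where `α • β = τ_{n+1}(β) ∘_1 α` is the last-slot composition. -/
theorem stmt3 {A : Type*} (Op : CyclicOperad A) (m n p : ℕ) (α β γ : A)
    (hα : Op.ar α = m) (hβ : Op.ar β = n) (hγ : Op.ar γ = p) :
    Op.lastComp (Op.lastComp α β) γ = Op.lastComp α (Op.comp β n γ) := by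
  unfold CyclicOperad.lastComp
  rw [← hβ, Op.cyc2 β γ,
    Op.assoc_seq (Op.rot γ) (Op.rot β) α 1 1 le_rfl
      ((Op.ar_rot γ).symm ▸ Op.ar_pos γ) le_rfl ((Op.ar_rot β).symm ▸ Op.ar_pos β)]
end

section
/- Let O be a cyclic operad. For α ∈ O(m) (regarded as an operation with m+1 inputs) and β ∈ O(n), define the extended (last-slot) composition α ∘_{m+1} β := τ_{n+1}(β) ∘_1 α ∈ O(m+n-1) (regarded as an operation with m+n inputs), while for 1 ≤ i ≤ m, α ∘_i β is the given composition of O. Then this extended composition satisfies the operad associativity axiom: for all α ∈ O(m), β ∈ O(n), γ ∈ O(p), (i) for 1 ≤ j ≤ m: (α ∘_{m+1} β) ∘_j γ = (α ∘_j γ) ∘_{m+p} β; (ii) for m < j < m+n: (α ∘_{m+1} β) ∘_j γ = α ∘_{m+1} (β ∘_{j-m} γ); and (iii) (α ∘_{m+1} β) ∘_{m+n} γ = α ∘_{m+1} (β ∘_n γ). (This is the Lemma establishing that the composition in the colored operad Ô is associative.) -/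
/-- Associativity of the composition in the colored operad `Ô`: extending the
partial compositions of a cyclic operad by the last-slot composition
`α ∘_{m+1} β := τ_{n+1}(β) ∘_1 α = α • β` (for `α ∈ O(m)` regarded as having
`m+1` inputs), the extended composition is associative; for
`α ∈ O(m)`, `β ∈ O(n)`, `γ ∈ O(p)`:
(i) `(α ∘_{m+1} β) ∘_j γ = (α ∘_j γ) ∘_{m+p} β` for `1 ≤ j ≤ m`
(the composition `∘_{m+p}` on the right being the last-slot composition of
`α ∘_j γ ∈ O(m+p-1)`);
(ii) `(α ∘_{m+1} β) ∘_j γ = α ∘_{m+1} (β ∘_{j-m} γ)` for `m < j < m+n`;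
(iii) `(α ∘_{m+1} β) ∘_{m+n} γ = α ∘_{m+1} (β ∘_n γ)`
(the composition `∘_{m+n}` on the left being the last-slot composition of
`α ∘_{m+1} β ∈ O(m+n-1)`). -/
theorem stmt4 {A : Type*} (Op : CyclicOperad A) (m n p : ℕ) (α β γ : A)
    (hα : Op.ar α = m) (hβ : Op.ar β = n) (hγ : Op.ar γ = p) :
    (∀ j : ℕ, 1 ≤ j → j ≤ m →
      Op.comp (Op.lastComp α β) j γ = Op.lastComp (Op.comp α j γ) β) ∧
    (∀ j : ℕ, m < j → j < m + n →
      Op.comp (Op.lastComp α β) j γ = Op.lastComp α (Op.comp β (j - m) γ)) ∧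
    (Op.lastComp (Op.lastComp α β) γ = Op.lastComp α (Op.comp β n γ)) := by
  have hn : 1 ≤ n := hβ ▸ Op.ar_pos β
  have hrβ : Op.ar (Op.rot β) = n := by rw [Op.ar_rot, hβ]
  have hrγ : Op.ar (Op.rot γ) = p := by rw [Op.ar_rot, hγ]
  refine ⟨?_, ?_, ?_⟩
  · intro j h1 hm
    unfold CyclicOperad.lastComp
    have := Op.assoc_seq (Op.rot β) α γ 1 j le_rfl (hrβ ▸ hn) h1 (hα ▸ hm)
    simpa using this
  · intro j hmj hjmn
    unfold CyclicOperad.lastComp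
    have h1 : Op.comp (Op.comp (Op.rot β) (j - m + 1) γ) 1 α
        = Op.comp (Op.comp (Op.rot β) 1 α) (j - m + 1 + Op.ar α - 1) γ :=
      Op.assoc_par (Op.rot β) α γ 1 (j - m + 1) le_rfl (by omega)
        (by omega)
    have h2 : Op.rot (Op.comp β (j - m) γ) = Op.comp (Op.rot β) (j - m + 1) γ :=
      Op.cyc1 β γ (j - m) (by omega) (by omega)
    rw [h2, h1, hα]
    congr 1
    omega
  · unfold CyclicOperad.lastComp
    have h2 : Op.rot (Op.comp β n γ) = Op.comp (Op.rot γ) 1 (Op.rot β) := by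
      rw [← hβ]; exact Op.cyc2 β γ
    rw [h2]
    have := Op.assoc_seq (Op.rot γ) (Op.rot β) α 1 1 le_rfl (hrγ ▸ hγ ▸ Op.ar_pos γ)
      le_rfl (hrβ ▸ hn)
    simpa using this.symm
end
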